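/- arXiv:1804.06513 — 2 statements merged into one kernel-verified Lean document; each statement's English description precedes it below -/
import Mathlib

section
/- Let J be a 2-torsion free Jordan ring containing a nontrivial idempotent e, with Peirce decomposition J = J₁ ⊕ J_{1/2} ⊕ J₀, and suppose: (i) for a_i ∈ J_i (i = 1, 0), if t a_i = 0 for all t ∈ J_{1/2} then a_i = 0; (ii) for a₀ ∈ J₀, if t a₀ = 0 for all t ∈ J₀ then a₀ = 0; (iii) for a ∈ J_{1/2}, if t a = 0 for all t ∈ J₀ then a = 0. Let J' be a Jordan ring and φ : J → J' a bijective n-multiplicative isomorphism (n ≥ 2). Then for all a₁ ∈ J₁, a_{1/2} ∈ J_{1/2}, a₀ ∈ J₀: φ(a₁ + a_{1/2} + a₀) = φ(a₁) + φ(a_{1/2}) + φ(a₀). -/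
/-- Peirce 1-component relative to `e`: elements `x` with `e*x = x`. -/
def peirce1 {J : Type*} [Mul J] (e : J) : Set J := {x | e * x = x}

/-- Peirce 1/2-component relative to `e`: elements `x` with `e*x = (1/2)x`, i.e. `e*x + e*x = x`. -/
def peirceHalf {J : Type*} [Mul J] [Add J] (e : J) : Set J := {x | e * x + e * x = x}

/-- Peirce 0-component relative to `e`: elements `x` with `e*x = 0`. -/
def peirce0 {J : Type*} [Mul J] [Zero J] (e : J) : Set J := {x | e * x = 0}

/-- The right-normed nonassociative monomial `x₁(x₂(⋯(x_{n-1}x_n)⋯))` on a list of arguments. -/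
def rnm {J : Type*} [Mul J] [Zero J] : List J → J
  | [] => 0
  | [x] => x
  | x :: y :: l => x * rnm (y :: l)

/-- `φ` is an `n`-multiplicative map (w.r.t. the right-normed monomial of degree `n`). -/
def IsNMulMap {J J' : Type*} [Mul J] [Zero J] [Mul J'] [Zero J'] (n : ℕ) (φ : J → J') : Prop :=
  ∀ l : List J, l.length = n → φ (rnm l) = rnm (l.map φ)

/-!
Write `L_x` for left multiplication by `x`. An `n`-multiplicative map preserves the products
`L_{x₁} ⋯ L_{x_k}` whenever `n - 1 ∣ k`, because such a product applied to `x` is a nested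
right-normed monomial. Hence if `φ c = φ x + φ y` and such an operator kills `y`, it also kills
`u = c - x - y` (by injectivity and `φ 0 = 0`). Built from `L_e` and elements of the Peirce spaces,
these operators kill one of the summands by the Peirce multiplication rules
(`J₁ J₀ = 0`, `e (J½ J½) ⊆ J₁`, …), and the nondegeneracy conditions then force `u = 0`.
This gives additivity first on `J₁ + J₀` and on `J₁ + J½`, and from these on `J₁ + J½ + J₀`.
-/

open AddMonoid.End Function

section RightNormed

variable {R : Type*}

lemma rnm_cons_of_ne_nil [Mul R] [Zero R] (x : R) {l : List R} (hl : l ≠ []) :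
    rnm (x :: l) = x * rnm l := by
  obtain ⟨y, l, rfl⟩ := List.exists_cons_of_ne_nil hl
  rfl

variable [NonUnitalNonAssocSemiring R]

@[simp]
lemma mulLeft_apply_eq_mul (r x : R) : (mulLeft r : AddMonoid.End R) x = r * x := rfl

def mulLeftProd (L : List R) : AddMonoid.End R := (L.map mulLeft).prod

@[simp]
lemma mulLeftProd_nil : mulLeftProd ([] : List R) = 1 := rfl

@[simp]
lemma mulLeftProd_cons_apply (a : R) (L : List R) (x : R) :
    mulLeftProd (a :: L) x = a * mulLeftProd L x := rfl

@[simp]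
lemma mulLeftProd_append (L M : List R) :
    mulLeftProd (L ++ M) = mulLeftProd L * mulLeftProd M := by
  simp [mulLeftProd]

@[simp]
lemma mulLeftProd_replicate (m : ℕ) (e : R) :
    mulLeftProd (List.replicate m e) = mulLeft e ^ m := by
  simp [mulLeftProd]

lemma rnm_append_singleton (L : List R) (x : R) : rnm (L ++ [x]) = mulLeftProd L x := by
  induction L with
  | nil => rfl
  | cons a L ih =>
    rw [List.cons_append, rnm_cons_of_ne_nil _ (by simp), ih, mulLeftProd_cons_apply]

end RightNormed

namespace IsNMulMap

variable {J J' : Type*} [NonUnitalNonAssocSemiring J] [NonUnitalNonAssocSemiring J']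
  {n : ℕ} {φ : J → J'}

lemma map_mulLeftProd_of_length_add_one (hφ : IsNMulMap n φ) {L : List J}
    (hL : L.length + 1 = n) (x : J) : φ (mulLeftProd L x) = mulLeftProd (L.map φ) (φ x) := by
  simpa [rnm_append_singleton] using hφ (L ++ [x]) (by simpa using hL)

lemma map_mulLeftProd (hφ : IsNMulMap n φ) {L : List J} (hL : n - 1 ∣ L.length) (x : J) :
    φ (mulLeftProd L x) = mulLeftProd (L.map φ) (φ x) := by
  obtain ⟨k, hk⟩ := hL
  induction k generalizing L with
  | zero => simp_all
  | succ k ih =>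
    rcases Nat.eq_zero_or_pos (n - 1) with h | h
    · simp_all
    have hle : n - 1 ≤ L.length := hk ▸ Nat.le_mul_of_pos_right _ k.succ_pos
    rw [← List.take_append_drop (n - 1) L, List.map_append, mulLeftProd_append,
      mulLeftProd_append, coe_mul, coe_mul, comp_apply, comp_apply,
      hφ.map_mulLeftProd_of_length_add_one (by grind),
      ih (by simp [hk, Nat.mul_succ])]

lemma map_zero (hφ : IsNMulMap n φ) (hn : 2 ≤ n) (hsurj : Surjective φ) : φ 0 = 0 := by
  obtain ⟨u, hu⟩ := hsurj 0
  obtain ⟨k, rfl⟩ : ∃ k, n = k + 2 := ⟨n - 2, by omega⟩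
  simpa [hu] using
    hφ.map_mulLeftProd_of_length_add_one (L := u :: List.replicate k u) (by simp) 0

end IsNMulMap

lemma IsNMulMap.mulLeftProd_sub_sub_eq_zero {J J' : Type*} [NonUnitalNonAssocRing J]
    [NonUnitalNonAssocSemiring J'] {n : ℕ} {φ : J → J'} (hφ : IsNMulMap n φ) (hn : 2 ≤ n)
    (hbij : Bijective φ) {c x y : J} (hc : φ c = φ x + φ y)
    {L : List J} (hL : n - 1 ∣ L.length) (hy : mulLeftProd L y = 0) :
    mulLeftProd L (c - x - y) = 0 := by
  have hcx : φ (mulLeftProd L c) = φ (mulLeftProd L x) := by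
    rw [hφ.map_mulLeftProd hL, hc, map_add, ← hφ.map_mulLeftProd hL, ← hφ.map_mulLeftProd hL,
      hy, hφ.map_zero hn hbij.2, add_zero]
  rw [map_sub, map_sub, hbij.1 hcx, hy, sub_self, sub_zero]

lemma IsCommJordan.of_sq_mul_mul {J : Type*} [CommMagma J]
    (h : ∀ x y : J, ((x * x) * y) * x = (x * x) * (y * x)) : IsCommJordan J where
  lmul_comm_rmul_rmul a b := by
    rw [mul_comm a b, mul_comm, mul_comm a, ← h, mul_comm _ a, mul_comm (a * a)]

lemma eq_of_add_self_eq_add_self {J : Type*} [AddCommGroup J]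
    (h2 : ∀ x : J, x + x = 0 → x = 0) {x y : J} (h : x + x = y + y) : x = y :=
  sub_eq_zero.1 <| h2 _ <| by rw [sub_add_sub_comm, h, sub_self]

attribute [local instance] LieRing.ofAssociativeRing in
lemma jordan_linearized {J : Type*} [NonUnitalNonAssocCommRing J] [IsCommJordan J]
    (h2 : ∀ x : J, x + x = 0 → x = 0) (a b c y : J) :
    a * ((b * c) * y) - (b * c) * (a * y) + (b * ((c * a) * y) - (c * a) * (b * y))
      + (c * ((a * b) * y) - (a * b) * (c * y)) = 0 := by
  have h := congrArg (· y) (two_nsmul_lie_lmul_lmul_add_add_eq_zero a b c)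
  simp only [Ring.lie_def, two_nsmul, AddMonoid.End.zero_apply] at h
  exact h2 _ h

section Peirce

variable {J : Type*} [NonUnitalNonAssocCommRing J] {e : J}

lemma mem_peirce1 {x : J} : x ∈ peirce1 e ↔ e * x = x := Iff.rfl

lemma mem_peirceHalf {x : J} : x ∈ peirceHalf e ↔ e * x + e * x = x := Iff.rfl

lemma mem_peirce0 {x : J} : x ∈ peirce0 e ↔ e * x = 0 := Iff.rfl

lemma mul_mem_peirceHalf_self {t : J} (ht : t ∈ peirceHalf e) : e * t ∈ peirceHalf e := by
  rw [mem_peirceHalf, ← mul_add, ht]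

lemma pow_mulLeft_apply_of_mem_peirce1 {a : J} (ha : a ∈ peirce1 e) (m : ℕ) :
    (mulLeft e ^ m) a = a := by
  rw [coe_pow]
  exact iterate_fixed ha m

lemma pow_mulLeft_apply_of_mem_peirce0 {z : J} (hz : z ∈ peirce0 e) {m : ℕ} (hm : m ≠ 0) :
    (mulLeft e ^ m) z = 0 := by
  obtain ⟨m, rfl⟩ := Nat.exists_eq_succ_of_ne_zero hm
  rw [pow_succ, coe_mul, comp_apply, mulLeft_apply_eq_mul, mem_peirce0.1 hz, map_zero]

lemma pow_mulLeft_apply_mem_peirceHalf {t : J} (ht : t ∈ peirceHalf e) (m : ℕ) :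
    (mulLeft e ^ m) t ∈ peirceHalf e := by
  induction m with
  | zero => simpa using ht
  | succ m ih =>
    rw [pow_succ', coe_mul, comp_apply, mulLeft_apply_eq_mul]
    exact mul_mem_peirceHalf_self ih

lemma eq_zero_of_pow_mulLeft_apply_eq_zero {t : J} (ht : t ∈ peirceHalf e) {m : ℕ}
    (h : (mulLeft e ^ m) t = 0) : t = 0 := by
  induction m generalizing t with
  | zero => simpa using h
  | succ m ih =>
    rw [pow_succ, coe_mul, comp_apply, mulLeft_apply_eq_mul] at h
    rw [← ht, ih (mul_mem_peirceHalf_self ht) h, add_zero]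

lemma pow_mulLeft_apply_of_mul_mem_peirce1 {w : J} (hw : e * w ∈ peirce1 e) {m : ℕ}
    (hm : m ≠ 0) : (mulLeft e ^ m) w = e * w := by
  obtain ⟨m, rfl⟩ := Nat.exists_eq_succ_of_ne_zero hm
  rw [pow_succ, coe_mul, comp_apply, mulLeft_apply_eq_mul, pow_mulLeft_apply_of_mem_peirce1 hw]

lemma eq_zero_of_forall_peirce0_mul_pow_mulLeft_apply_eq_zero
    (hcond3 : ∀ a ∈ peirceHalf e, (∀ t ∈ peirce0 e, t * a = 0) → a = 0)
    {t : J} (ht : t ∈ peirceHalf e) {m : ℕ}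
    (h : ∀ z ∈ peirce0 e, z * (mulLeft e ^ m) t = 0) : t = 0 :=
  eq_zero_of_pow_mulLeft_apply_eq_zero ht (hcond3 _ (pow_mulLeft_apply_mem_peirceHalf ht m) h)

end Peirce

section JordanIdempotent

variable {J : Type*} [NonUnitalNonAssocCommRing J] [IsCommJordan J]
  (h2 : ∀ x : J, x + x = 0 → x = 0) {e : J} (he : e * e = e)
include h2 he

lemma jordan_linearized_of_idempotent (z y : J) :
    z * (e * y) + 2 • (e * ((e * z) * y)) = e * (z * y) + 2 • ((e * z) * (e * y)) := by
  have h := jordan_linearized h2 e e z y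
  rw [he, mul_comm z e] at h
  linear_combination (norm := module) h

lemma idempotent_cubic (u : J) : e * u + 2 • (e * (e * (e * u))) = 3 • (e * (e * u)) := by
  have h := jordan_linearized_of_idempotent h2 he u e
  rw [he, mul_comm u e, mul_comm (e * u) e] at h
  linear_combination (norm := module) h

lemma mul_left_comm_of_mem_peirce1 {a : J} (ha : a ∈ peirce1 e) (y : J) :
    e * (a * y) = a * (e * y) := by
  have h := jordan_linearized_of_idempotent h2 he a y
  rw [mem_peirce1.1 ha] at h
  linear_combination (norm := module) h

lemma mul_assoc_of_mem_peirce0 {z : J} (hz : z ∈ peirce0 e) (y : J) :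
    (e * y) * z = e * (y * z) := by
  have h := jordan_linearized_of_idempotent h2 he z y
  rw [mem_peirce0.1 hz, zero_mul, zero_mul, mul_zero, smul_zero, add_zero, add_zero,
    mul_comm z, mul_comm z] at h
  exact h

lemma mul_eq_zero_of_mem_peirce1_of_mem_peirce0 {a z : J} (ha : a ∈ peirce1 e)
    (hz : z ∈ peirce0 e) : a * z = 0 := by
  rw [← mem_peirce1.1 ha, mul_assoc_of_mem_peirce0 h2 he hz, mul_left_comm_of_mem_peirce1 h2 he ha,
    mem_peirce0.1 hz, mul_zero]

lemma mul_mem_peirce0 {z w : J} (hz : z ∈ peirce0 e) (hw : w ∈ peirce0 e) :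
    z * w ∈ peirce0 e := by
  rw [mem_peirce0, ← mul_assoc_of_mem_peirce0 h2 he hw, mem_peirce0.1 hz, zero_mul]

lemma mul_mem_peirceHalf_of_mem_peirce1 {t a : J} (ht : t ∈ peirceHalf e) (ha : a ∈ peirce1 e) :
    t * a ∈ peirceHalf e := by
  rw [mem_peirceHalf, mul_comm t a, mul_left_comm_of_mem_peirce1 h2 he ha, ← mul_add, ht]

lemma mul_mem_peirceHalf_of_mem_peirce0 {t z : J} (ht : t ∈ peirceHalf e) (hz : z ∈ peirce0 e) :
    t * z ∈ peirceHalf e := by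
  rw [mem_peirceHalf, ← mul_assoc_of_mem_peirce0 h2 he hz, ← add_mul, ht]

lemma mul_mem_peirce1_of_mem_peirceHalf {t s : J} (ht : t ∈ peirceHalf e)
    (hs : s ∈ peirceHalf e) : e * (t * s) ∈ peirce1 e := by
  have hts : ∀ {t s : J}, t ∈ peirceHalf e → s ∈ peirceHalf e →
      t * (e * (e * s)) = (e * t) * (e * s) := fun {t s} ht hs =>
    eq_of_add_self_eq_add_self h2 <| by
      rw [← mul_add, mul_mem_peirceHalf_self hs, ← add_mul, ht]
  have h := jordan_linearized h2 t s e e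
  rw [he, mul_comm s e, mul_comm t e, mul_comm (e * s) e, mul_comm (e * t) e,
    mul_comm (t * s) e, hts ht hs, hts hs ht] at h
  rw [mem_peirce1]
  linear_combination (norm := module) h

lemma exists_peirce_decomposition (u : J) :
    ∃ u₁ ∈ peirce1 e, ∃ u₂ ∈ peirceHalf e, ∃ u₀ ∈ peirce0 e, u₁ + u₂ + u₀ = u := by
  have h := idempotent_cubic h2 he u
  refine ⟨2 • (e * (e * u)) - e * u, ?_, 4 • (e * u - e * (e * u)), ?_,
    u - 3 • (e * u) + 2 • (e * (e * u)), ?_, by abel⟩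
  · rw [mem_peirce1]
    simp only [mul_sub, mul_smul_comm]
    linear_combination (norm := module) h
  · rw [mem_peirceHalf]
    simp only [mul_sub, mul_smul_comm]
    linear_combination (norm := module) (-4 : ℤ) • h
  · rw [mem_peirce0]
    simp only [mul_sub, mul_add, mul_smul_comm]
    linear_combination (norm := module) h

lemma mem_peirce0_of_pow_mulLeft_apply_eq_zero {u : J} {m : ℕ} (hm : m ≠ 0)
    (h : (mulLeft e ^ m) u = 0) : u ∈ peirce0 e := by
  obtain ⟨m, rfl⟩ := Nat.exists_eq_succ_of_ne_zero hm
  induction m generalizing u with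
  | zero => simpa [mem_peirce0] using h
  | succ m ih =>
    rw [pow_succ, coe_mul, comp_apply, mulLeft_apply_eq_mul] at h
    have heu : e * (e * u) = 0 := ih m.succ_ne_zero h
    simpa [heu, mem_peirce0] using idempotent_cubic h2 he u

lemma mul_pow_mulLeft_apply_mul_eq_zero {z t s : J} (hz : z ∈ peirce0 e) (ht : t ∈ peirceHalf e)
    (hs : s ∈ peirceHalf e) {m : ℕ} (hm : m ≠ 0) : z * (mulLeft e ^ m) (t * s) = 0 := by
  have hts := mul_mem_peirce1_of_mem_peirceHalf h2 he ht hs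
  rw [pow_mulLeft_apply_of_mul_mem_peirce1 hts hm, mul_comm]
  exact mul_eq_zero_of_mem_peirce1_of_mem_peirce0 h2 he hts hz

lemma mulLeftProd_cons_apply_eq_zero {z a : J} {l : List J} (hz : z ∈ peirce0 e)
    (hl : ∀ w ∈ l, w ∈ peirce0 e) (ha : a ∈ peirce1 e) : mulLeftProd (z :: l) a = 0 := by
  induction l generalizing z with
  | nil => simpa [mul_comm z] using mul_eq_zero_of_mem_peirce1_of_mem_peirce0 h2 he ha hz
  | cons w l ih =>
    obtain ⟨hw, hl⟩ := List.forall_mem_cons.1 hl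
    rw [mulLeftProd_cons_apply, ih hw hl, mul_zero]

lemma mulLeftProd_apply_mem_peirce0 {u : J} {l : List J} (hl : ∀ w ∈ l, w ∈ peirce0 e)
    (hu : u ∈ peirce0 e) : mulLeftProd l u ∈ peirce0 e := by
  induction l with
  | nil => simpa using hu
  | cons w l ih =>
    obtain ⟨hw, hl⟩ := List.forall_mem_cons.1 hl
    exact mul_mem_peirce0 h2 he hw (ih hl)

lemma eq_zero_of_forall_mulLeftProd_apply_eq_zero
    (hcond2 : ∀ a ∈ peirce0 e, (∀ t ∈ peirce0 e, t * a = 0) → a = 0)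
    {u : J} (hu : u ∈ peirce0 e) {k : ℕ}
    (h : ∀ l : List J, (∀ w ∈ l, w ∈ peirce0 e) → l.length = k → mulLeftProd l u = 0) :
    u = 0 := by
  induction k with
  | zero => simpa using h [] (by simp) rfl
  | succ k ih =>
    refine ih fun l hl hlen => hcond2 _ (mulLeftProd_apply_mem_peirce0 h2 he hl hu) fun t ht => ?_
    exact h (t :: l) (List.forall_mem_cons.2 ⟨ht, hl⟩) (by simp [hlen])

lemma eq_zero_of_forall_peirce0_mul_pow_mulLeft_apply_mul_eq_zero
    (hcond1' : ∀ a ∈ peirce0 e, (∀ t ∈ peirceHalf e, t * a = 0) → a = 0)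
    (hcond3 : ∀ a ∈ peirceHalf e, (∀ t ∈ peirce0 e, t * a = 0) → a = 0)
    {u : J} (hu : u ∈ peirce0 e) {m : ℕ}
    (h : ∀ z ∈ peirce0 e, ∀ t ∈ peirceHalf e, z * (mulLeft e ^ m) (t * u) = 0) : u = 0 :=
  hcond1' u hu fun t ht => eq_zero_of_forall_peirce0_mul_pow_mulLeft_apply_eq_zero hcond3
    (mul_mem_peirceHalf_of_mem_peirce0 h2 he ht hu) fun z hz => h z hz t ht

lemma mem_peirce0_of_forall_peirce0_mul_eq_zero
    (hcond1 : ∀ a ∈ peirce1 e, (∀ t ∈ peirceHalf e, t * a = 0) → a = 0)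
    (hcond3 : ∀ a ∈ peirceHalf e, (∀ t ∈ peirce0 e, t * a = 0) → a = 0)
    {u : J} {m m' : ℕ} (hm : m ≠ 0) (hm' : m' ≠ 0)
    (h₁ : ∀ z ∈ peirce0 e, ∀ t ∈ peirceHalf e, z * (mulLeft e ^ m) (t * (e * u)) = 0)
    (h₂ : ∀ z ∈ peirce0 e, z * (mulLeft e ^ m') u = 0) : u ∈ peirce0 e := by
  -- Since `J₀` kills `e * (J½ * J½) ⊆ J₁`, `h₁` only sees the `J₁`-component of `u`; once that
  -- is gone, `h₂` only sees the `J½`-component.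
  obtain ⟨u₁, hu₁, u₂, hu₂, u₀, hu₀, rfl⟩ := exists_peirce_decomposition h2 he u
  have heu : e * (u₁ + u₂ + u₀) = u₁ + e * u₂ := by
    rw [mul_add, mul_add, mem_peirce1.1 hu₁, mem_peirce0.1 hu₀, add_zero]
  have hu₁0 : u₁ = 0 := hcond1 u₁ hu₁ fun t ht =>
    eq_zero_of_forall_peirce0_mul_pow_mulLeft_apply_eq_zero hcond3
      (mul_mem_peirceHalf_of_mem_peirce1 h2 he ht hu₁) fun z hz => by
        have h := h₁ z hz t ht
        rwa [heu, mul_add, map_add, mul_add, mul_pow_mulLeft_apply_mul_eq_zero h2 he hz ht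
          (mul_mem_peirceHalf_self hu₂) hm, add_zero] at h
  have hu₂0 : u₂ = 0 := eq_zero_of_forall_peirce0_mul_pow_mulLeft_apply_eq_zero hcond3 hu₂
    (m := m') fun z hz => by
      have h := h₂ z hz
      rwa [hu₁0, zero_add, map_add, pow_mulLeft_apply_of_mem_peirce0 hu₀ hm', add_zero] at h
  simpa [hu₁0, hu₂0] using hu₀

end JordanIdempotent

lemma map_add_of_forall_sub_sub_eq_zero {J J' : Type*} [AddCommGroup J] [Add J'] {φ : J → J'}
    (hsurj : Surjective φ) {x y : J} (h : ∀ c, φ c = φ x + φ y → c - x - y = 0) :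
    φ (x + y) = φ x + φ y := by
  obtain ⟨c, hc⟩ := hsurj (φ x + φ y)
  have hcxy : c = x + y := by rw [← sub_eq_zero, ← sub_sub]; exact h c hc
  rw [← hcxy, hc]

section NMulIso

variable {J J' : Type*} [NonUnitalNonAssocCommRing J] [IsCommJordan J]
  [NonUnitalNonAssocSemiring J'] (h2 : ∀ x : J, x + x = 0 → x = 0) {e : J} (he : e * e = e)
  {n : ℕ} (hn : 2 ≤ n) {φ : J → J'} (hφ : IsNMulMap n φ) (hbij : Bijective φ)
include h2 he hn hφ hbij

lemma sub_sub_mem_peirce0_of_mem_peirce0 {c x y : J} (hc : φ c = φ x + φ y)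
    (hy : y ∈ peirce0 e) : c - x - y ∈ peirce0 e := by
  refine mem_peirce0_of_pow_mulLeft_apply_eq_zero h2 he (m := n - 1) (by omega) ?_
  simpa using hφ.mulLeftProd_sub_sub_eq_zero hn hbij hc (L := List.replicate (n - 1) e)
    (by simp) (by simpa using pow_mulLeft_apply_of_mem_peirce0 hy (by omega))

lemma sub_sub_eq_zero_of_mem_peirceHalf
    (hcond1' : ∀ a ∈ peirce0 e, (∀ t ∈ peirceHalf e, t * a = 0) → a = 0)
    (hcond3 : ∀ a ∈ peirceHalf e, (∀ t ∈ peirce0 e, t * a = 0) → a = 0)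
    {c x y : J} (hc : φ c = φ x + φ y) (hy : y ∈ peirceHalf e) (hu : c - x - y ∈ peirce0 e) :
    c - x - y = 0 := by
  refine eq_zero_of_forall_peirce0_mul_pow_mulLeft_apply_mul_eq_zero h2 he hcond1' hcond3 hu
    (m := 3 * (n - 1) - 2) fun z hz t ht => ?_
  simpa using hφ.mulLeftProd_sub_sub_eq_zero hn hbij hc
    (L := z :: (List.replicate (3 * (n - 1) - 2) e ++ [t])) ⟨3, by grind⟩
    (by simpa using mul_pow_mulLeft_apply_mul_eq_zero h2 he hz ht hy (by omega))

lemma map_add_of_mem_peirce1_of_mem_peirce0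
    (hcond2 : ∀ a ∈ peirce0 e, (∀ t ∈ peirce0 e, t * a = 0) → a = 0)
    {a b : J} (ha : a ∈ peirce1 e) (hb : b ∈ peirce0 e) : φ (a + b) = φ a + φ b := by
  refine map_add_of_forall_sub_sub_eq_zero hbij.2 fun c hc => ?_
  refine eq_zero_of_forall_mulLeftProd_apply_eq_zero h2 he hcond2
    (sub_sub_mem_peirce0_of_mem_peirce0 h2 he hn hφ hbij hc hb) (k := n - 1) fun l hl hlen => ?_
  obtain ⟨z, l, rfl⟩ := List.exists_cons_of_ne_nil (List.ne_nil_of_length_pos (l := l) (by omega))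
  obtain ⟨hz, hl⟩ := List.forall_mem_cons.1 hl
  rw [sub_right_comm]
  exact hφ.mulLeftProd_sub_sub_eq_zero hn hbij (hc.trans (add_comm _ _)) (hlen ▸ dvd_rfl)
    (mulLeftProd_cons_apply_eq_zero h2 he hz hl ha)

lemma map_add_of_mem_peirce1_of_mem_peirceHalf
    (hcond1 : ∀ a ∈ peirce1 e, (∀ t ∈ peirceHalf e, t * a = 0) → a = 0)
    (hcond1' : ∀ a ∈ peirce0 e, (∀ t ∈ peirceHalf e, t * a = 0) → a = 0)
    (hcond3 : ∀ a ∈ peirceHalf e, (∀ t ∈ peirce0 e, t * a = 0) → a = 0)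
    {a b : J} (ha : a ∈ peirce1 e) (hb : b ∈ peirceHalf e) : φ (a + b) = φ a + φ b := by
  refine map_add_of_forall_sub_sub_eq_zero hbij.2 fun c hc => ?_
  refine sub_sub_eq_zero_of_mem_peirceHalf h2 he hn hφ hbij hcond1' hcond3 hc hb ?_
  refine mem_peirce0_of_forall_peirce0_mul_eq_zero h2 he hcond1 hcond3
    (m := 4 * (n - 1) - 3) (m' := 4 * (n - 1) - 1) (by omega) (by omega)
    (fun z hz t ht => ?_) (fun z hz => ?_)
  · have hb' := mul_pow_mulLeft_apply_mul_eq_zero h2 he hz ht (mul_mem_peirceHalf_self hb)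
      (m := 4 * (n - 1) - 3) (by omega)
    simpa using hφ.mulLeftProd_sub_sub_eq_zero hn hbij hc
      (L := z :: (List.replicate (4 * (n - 1) - 3) e ++ [t, e])) ⟨4, by grind⟩
      (by simpa using hb')
  · have ha' : mulLeftProd (z :: List.replicate (4 * (n - 1) - 1) e) a = 0 := by
      rw [mulLeftProd_cons_apply, mulLeftProd_replicate, pow_mulLeft_apply_of_mem_peirce1 ha,
        mul_comm]
      exact mul_eq_zero_of_mem_peirce1_of_mem_peirce0 h2 he ha hz
    rw [sub_right_comm]
    simpa using hφ.mulLeftProd_sub_sub_eq_zero hn hbij (hc.trans (add_comm _ _)) ⟨4, by grind⟩ ha'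

end NMulIso

theorem nMulIso_add_components_general {J J' : Type*} [NonUnitalNonAssocCommRing J] [NonUnitalNonAssocCommRing J']
    (hJordan : ∀ x y : J, ((x * x) * y) * x = (x * x) * (y * x))
    (h2 : ∀ x : J, x + x = 0 → x = 0)
    (e : J) (hid : e * e = e)
    (hcond1 : ∀ a ∈ peirce1 e, (∀ t ∈ peirceHalf e, t * a = 0) → a = 0)
    (hcond1' : ∀ a ∈ peirce0 e, (∀ t ∈ peirceHalf e, t * a = 0) → a = 0)
    (hcond2 : ∀ a ∈ peirce0 e, (∀ t ∈ peirce0 e, t * a = 0) → a = 0)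
    (hcond3 : ∀ a ∈ peirceHalf e, (∀ t ∈ peirce0 e, t * a = 0) → a = 0)
    (n : ℕ) (hn : 2 ≤ n) (φ : J → J')
    (hbij : Function.Bijective φ) (hmul : IsNMulMap n φ) :
    ∀ a₁ ∈ peirce1 e, ∀ a₂ ∈ peirceHalf e, ∀ a₀ ∈ peirce0 e,
      φ (a₁ + a₂ + a₀) = φ a₁ + φ a₂ + φ a₀ := by
  have := IsCommJordan.of_sq_mul_mul hJordan
  intro a₁ h₁ a₂ h₂ a₀ h₀
  have hadd₁₂ := map_add_of_mem_peirce1_of_mem_peirceHalf h2 hid hn hmul hbij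
    hcond1 hcond1' hcond3 h₁ h₂
  have hadd₁₀ := map_add_of_mem_peirce1_of_mem_peirce0 h2 hid hn hmul hbij hcond2 h₁ h₀
  rw [← hadd₁₂]
  refine map_add_of_forall_sub_sub_eq_zero hbij.2 fun c hc => ?_
  have hc' : φ c = φ (a₁ + a₀) + φ a₂ := by rw [hc, hadd₁₂, hadd₁₀, add_right_comm]
  have hu : c - (a₁ + a₂) - a₀ = c - (a₁ + a₀) - a₂ := by abel
  have hu₀ := sub_sub_mem_peirce0_of_mem_peirce0 h2 hid hn hmul hbij hc h₀
  rw [hu] at hu₀ ⊢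
  exact sub_sub_eq_zero_of_mem_peirceHalf h2 hid hn hmul hbij hcond1' hcond3 hc' h₂ hu₀

theorem nMulIso_add_components {J J' : Type*} [NonUnitalNonAssocCommRing J] [NonUnitalNonAssocCommRing J']
    (hJordan : ∀ x y : J, ((x * x) * y) * x = (x * x) * (y * x))
    (hJordan' : ∀ x y : J', ((x * x) * y) * x = (x * x) * (y * x))
    (h2 : ∀ x : J, x + x = 0 → x = 0)
    (e : J) (hid : e * e = e) (hne : e ≠ 0) (hnu : ∃ x : J, e * x ≠ x)
    (hcond1 : ∀ a ∈ peirce1 e, (∀ t ∈ peirceHalf e, t * a = 0) → a = 0)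
    (hcond1' : ∀ a ∈ peirce0 e, (∀ t ∈ peirceHalf e, t * a = 0) → a = 0)
    (hcond2 : ∀ a ∈ peirce0 e, (∀ t ∈ peirce0 e, t * a = 0) → a = 0)
    (hcond3 : ∀ a ∈ peirceHalf e, (∀ t ∈ peirce0 e, t * a = 0) → a = 0)
    (n : ℕ) (hn : 2 ≤ n) (φ : J → J')
    (hbij : Function.Bijective φ) (hmul : IsNMulMap n φ) :
    ∀ a₁ ∈ peirce1 e, ∀ a₂ ∈ peirceHalf e, ∀ a₀ ∈ peirce0 e,
      φ (a₁ + a₂ + a₀) = φ a₁ + φ a₂ + φ a₀ :=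
  nMulIso_add_components_general hJordan h2 e hid hcond1 hcond1' hcond2 hcond3 n hn φ hbij hmul
end

section
/- Let J be a Jordan ring with idempotent e and d : J → J an n-multiplicative derivation (n ≥ 2). Assume J is (n−1)-torsion free and 2-torsion free. Writing d(e) = a₁ + a_{1/2} + a₀ with respect to the Peirce decomposition relative to e, one has a₁ = a₀ = 0; that is, d(e) ∈ J_{1/2}. -/
/-- `d` is an `n`-multiplicative derivation (w.r.t. the right-normed monomial of degree `n`):
`d(m(x₁,…,xₙ)) = Σᵢ m(x₁,…,d(xᵢ),…,xₙ)`. -/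
def IsNDer {J : Type*} [NonUnitalNonAssocRing J] (n : ℕ) (d : J → J) : Prop :=
  ∀ l : List J, l.length = n →
    d (rnm l) = ∑ i ∈ Finset.range n, rnm (l.set i (d (l.getD i 0)))

/-! Write `L` for left multiplication by `e`. Expanding `d e = d (e(e(⋯(e e)⋯)))` by the derivation
rule gives `d e = Σᵢ Lᵏⁱ (d e)` with every `kᵢ ≥ 1`. The operator `2L - 1` fixes `a₁`, kills the
`J_{1/2}`-part and negates `a₀`, while `Lᵏ` annihilates `a₀` for `k ≥ 1`; applying `2L - 1` to both
sides therefore gives `a₁ - a₀ = n a₁`. Multiplying by `e` yields `(n - 1) a₁ = 0`, so `a₁ = 0`,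
and then `a₀ = 0`. -/

section

open AddMonoid.End

variable {J : Type*} [NonUnitalNonAssocCommRing J] {e : J}

lemma mulLeft_pow_succ_apply (x : J) (k : ℕ) :
    (mulLeft e ^ (k + 1)) x = e * (mulLeft e ^ k) x := by
  rw [pow_succ']; rfl

lemma mulLeft_pow_succ_apply' (x : J) (k : ℕ) :
    (mulLeft e ^ (k + 1)) x = (mulLeft e ^ k) (e * x) := by
  rw [pow_succ]; rfl

lemma mulLeft_pow_apply_of_mem_peirce1 {a : J} (ha : a ∈ peirce1 e) (k : ℕ) :
    (mulLeft e ^ k) a = a := by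
  rw [coe_pow]
  exact Function.iterate_fixed ha k

lemma mulLeft_pow_succ_apply_of_mem_peirce0 {a : J} (ha : a ∈ peirce0 e) (k : ℕ) :
    (mulLeft e ^ (k + 1)) a = 0 := by
  rw [mulLeft_pow_succ_apply', ha, map_zero]

lemma mulLeft_pow_succ_apply_of_mem_peirceHalf {a : J} (ha : a ∈ peirceHalf e) (k : ℕ) :
    (mulLeft e ^ (k + 1)) a + (mulLeft e ^ (k + 1)) a = (mulLeft e ^ k) a := by
  rw [mulLeft_pow_succ_apply', ← map_add]
  exact congrArg _ ha

lemma mulLeft_pow_succ_apply_of_peirce {a₁ a₂ a₀ : J} (h₁ : a₁ ∈ peirce1 e)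
    (h₂ : a₂ ∈ peirceHalf e) (h₀ : a₀ ∈ peirce0 e) (k : ℕ) :
    (mulLeft e ^ (k + 1)) (a₁ + a₂ + a₀) + (mulLeft e ^ (k + 1)) (a₁ + a₂ + a₀)
      - (mulLeft e ^ k) (a₁ + a₂ + a₀) = a₁ - (mulLeft e ^ k) a₀ := by
  have half := mulLeft_pow_succ_apply_of_mem_peirceHalf h₂ k
  simp only [map_add, mulLeft_pow_apply_of_mem_peirce1 h₁,
    mulLeft_pow_succ_apply_of_mem_peirce0 h₀, ← half]
  abel

lemma rnm_replicate (he : e * e = e) : ∀ {k : ℕ}, k ≠ 0 → rnm (List.replicate k e) = e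
  | 1, _ => rfl
  | k + 2, _ => by
    rw [List.replicate_succ, List.replicate_succ, rnm, ← List.replicate_succ,
      rnm_replicate he k.succ_ne_zero, he]

-- In the last slot `x` is preceded by only `n - 1` factors `e`, hence the `min`.
lemma rnm_replicate_set (he : e * e = e) (x : J) : ∀ {n i : ℕ}, i < n →
    rnm ((List.replicate n e).set i x) = (mulLeft e ^ min (i + 1) (n - 1)) x
  | 1, 0, _ => rfl
  | n + 2, 0, _ => by
    rw [List.replicate_succ, List.set_cons_zero, List.replicate_succ, rnm,
      ← List.replicate_succ, rnm_replicate he n.succ_ne_zero, mul_comm]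
    rfl
  | n + 2, i + 1, hi => by
    obtain ⟨y, l, hyl⟩ := List.exists_cons_of_ne_nil
      (by simp : (List.replicate (n + 1) e).set i x ≠ [])
    rw [List.replicate_succ, List.set_cons_succ, hyl, rnm, ← hyl,
      rnm_replicate_set he x (by omega : i < n + 1),
      show min (i + 1 + 1) (n + 2 - 1) = min (i + 1) (n + 1 - 1) + 1 by omega,
      mulLeft_pow_succ_apply]

lemma IsNDer.apply_idempotent {n : ℕ} {d : J → J} (hder : IsNDer n d) (he : e * e = e)
    (hn : n ≠ 0) : d e = ∑ i ∈ Finset.range n, (mulLeft e ^ min (i + 1) (n - 1)) (d e) := by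
  calc d e = d (rnm (List.replicate n e)) := by rw [rnm_replicate he hn]
    _ = _ := hder _ List.length_replicate
    _ = _ := Finset.sum_congr rfl fun i hi => by
      have hi : i < n := Finset.mem_range.mp hi
      rw [List.getD_replicate e hi, rnm_replicate_set he _ hi]

lemma IsNDer.sub_eq_nsmul_of_peirce {n : ℕ} {d : J → J} (hder : IsNDer n d) (he : e * e = e)
    (hn : 2 ≤ n) {a₁ a₂ a₀ : J} (h₁ : a₁ ∈ peirce1 e) (h₂ : a₂ ∈ peirceHalf e)
    (h₀ : a₀ ∈ peirce0 e) (hde : d e = a₁ + a₂ + a₀) : a₁ - a₀ = n • a₁ := by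
  set T : AddMonoid.End J := mulLeft e + mulLeft e - 1
  have hT : ∀ k, T ((mulLeft e ^ k) (d e)) = a₁ - (mulLeft e ^ k) a₀ := fun k => by
    rw [hde, ← mulLeft_pow_succ_apply_of_peirce h₁ h₂ h₀ k, mulLeft_pow_succ_apply]
    rfl
  calc a₁ - a₀ = T (d e) := by simpa using (hT 0).symm
    _ = ∑ i ∈ Finset.range n, T ((mulLeft e ^ min (i + 1) (n - 1)) (d e)) := by
      rw [← map_sum, ← hder.apply_idempotent he (by omega)]
    _ = ∑ i ∈ Finset.range n, a₁ := Finset.sum_congr rfl fun i _ => by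
      rw [hT, show min (i + 1) (n - 1) = min (i + 1) (n - 1) - 1 + 1 by omega,
        mulLeft_pow_succ_apply_of_mem_peirce0 h₀, sub_zero]
    _ = n • a₁ := by rw [Finset.sum_const, Finset.card_range]

end

theorem nDer_idempotent_image_general {n : ℕ} (hn : 2 ≤ n) {J : Type*} [NonUnitalNonAssocCommRing J]
    (hn1 : ∀ x : J, (n - 1) • x = 0 → x = 0)
    (e : J) (hid : e * e = e)
    (d : J → J) (hder : IsNDer n d) :
    ∀ a₁ ∈ peirce1 e, ∀ a₂ ∈ peirceHalf e, ∀ a₀ ∈ peirce0 e,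
      d e = a₁ + a₂ + a₀ → a₁ = 0 ∧ a₀ = 0 := by
  intro a₁ h₁ a₂ h₂ a₀ h₀ hde
  have hsub := hder.sub_eq_nsmul_of_peirce hid hn h₁ h₂ h₀ hde
  have hfix : n • a₁ = a₁ := calc
    n • a₁ = e * (n • a₁) := by rw [mul_smul_comm, h₁]
    _ = a₁ := by rw [← hsub, mul_sub, h₁, h₀, sub_zero]
  have ha₁ : a₁ = 0 := hn1 a₁ <| by
    rw [← add_left_inj a₁, ← succ_nsmul, Nat.sub_add_cancel (by omega), hfix, zero_add]
  refine ⟨ha₁, ?_⟩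
  rwa [ha₁, smul_zero, zero_sub, neg_eq_zero] at hsub

theorem nDer_idempotent_image {n : ℕ} (hn : 2 ≤ n) {J : Type*} [NonUnitalNonAssocCommRing J]
    (hJordan : ∀ x y : J, ((x * x) * y) * x = (x * x) * (y * x))
    (h2 : ∀ x : J, x + x = 0 → x = 0)
    (hn1 : ∀ x : J, (n - 1) • x = 0 → x = 0)
    (e : J) (hid : e * e = e) (hne : e ≠ 0) (hnu : ∃ x : J, e * x ≠ x)
    (d : J → J) (hder : IsNDer n d) :
    ∀ a₁ ∈ peirce1 e, ∀ a₂ ∈ peirceHalf e, ∀ a₀ ∈ peirce0 e,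
      d e = a₁ + a₂ + a₀ → a₁ = 0 ∧ a₀ = 0 :=
  nDer_idempotent_image_general hn hn1 e hid d hder
end
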